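/- For the function f(C) = 511 − Σ_{u=3}^{U} b(u)·(2^{u−2} − 1), where b(u) is the u-th bit of the integer C (0-indexed from the least significant bit), f is nonincreasing in C for 0 ≤ C ≤ 2048, f(0) = 511, and f(2048) = 0. -/

import Mathlib

open Finset

/-- `f C = 511 − Σ_{u=3}^{11} b(u)·(2^{u−2} − 1)`, where `b(u)` is the `u`-th bit of `C`. -/
def f (C : ℕ) : ℕ :=
  511 - ∑ u ∈ Finset.Icc 3 11, (if C.testBit u then 2 ^ (u - 2) - 1 else 0)

/-!
The subtracted sum depends only on `n = C / 8`, where it reads `Σ_{i<9} b_i(n)·(2^{i+1} - 1)`.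
Passing from `n` to `n + 1` clears the trailing ones below some position `j` and sets bit `j`,
so the sum grows by `2^{j+1} - 1 - Σ_{i<j} (2^{i+1} - 1) = j + 1 > 0`, provided the carry stays
within the nine bits, i.e. `n + 1 < 2^9`; and `C ≤ 2048` gives `n ≤ 256`.
-/

-- The factor `c` is general because halving `n` doubles the weights.
def weightedBitSum (c k n : ℕ) : ℕ :=
  ∑ i ∈ range k, if n.testBit i then c * 2 ^ i - 1 else 0

theorem weightedBitSum_succ (c k n : ℕ) :
    weightedBitSum c (k + 1) n =
      n % 2 * (c - 1) + weightedBitSum (2 * c) k (n / 2) := by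
  have hbit0 : (if n.testBit 0 then c * 2 ^ 0 - 1 else 0) = n % 2 * (c - 1) := by
    rcases Nat.mod_two_eq_zero_or_one n with h | h <;> simp [Nat.testBit_zero, h]
  rw [weightedBitSum, sum_range_succ', hbit0, add_comm]
  congr 1
  refine sum_congr rfl fun i _ => ?_
  rw [Nat.testBit_succ, pow_succ, mul_comm 2 c, mul_assoc, mul_comm 2]

theorem weightedBitSum_add_le_succ (c k n : ℕ) (hn : n + 1 < 2 ^ k) :
    weightedBitSum c k n + c ≤ weightedBitSum c k (n + 1) + 1 := by
  induction k generalizing c n with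
  | zero => simp at hn
  | succ k ih =>
    rw [weightedBitSum_succ, weightedBitSum_succ]
    rcases Nat.even_or_odd' n with ⟨q, rfl | rfl⟩
    · have hn0 : (2 * q) % 2 = 0 := by omega
      have hn1 : (2 * q + 1) % 2 = 1 := by omega
      have hq : 2 * q / 2 = q := by omega
      have hq' : (2 * q + 1) / 2 = q := by omega
      simp only [hn0, hn1, hq, hq', zero_mul, one_mul]
      omega
    · have hn1 : (2 * q + 1) % 2 = 1 := by omega
      have hn0 : (2 * q + 1 + 1) % 2 = 0 := by omega
      have hq : (2 * q + 1) / 2 = q := by omega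
      have hq' : (2 * q + 1 + 1) / 2 = q + 1 := by omega
      have := ih (2 * c) q (by rw [pow_succ] at hn; omega)
      simp only [hn0, hn1, hq, hq', zero_mul, one_mul]
      omega

theorem weightedBitSum_monotoneOn {c : ℕ} (hc : 1 ≤ c) (k : ℕ) :
    MonotoneOn (weightedBitSum c k) (Set.Iio (2 ^ k)) := by
  intro n _ m hm hnm
  induction m, hnm using Nat.le_induction with
  | base => rfl
  | succ m _ ih =>
    have hstep := weightedBitSum_add_le_succ c k m hm
    have := ih (by simp only [Set.mem_Iio] at hm ⊢; omega)
    omega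

theorem sum_Icc_testBit_eq_weightedBitSum (C : ℕ) :
    ∑ u ∈ Icc 3 11, (if C.testBit u then 2 ^ (u - 2) - 1 else 0) = weightedBitSum 2 9 (C / 8) := by
  rw [weightedBitSum, show Icc 3 11 = Ico 3 (3 + 9) from rfl, sum_Ico_eq_sum_range]
  refine sum_congr rfl fun i _ => ?_
  rw [show C / 8 = C >>> 3 by rw [Nat.shiftRight_eq_div_pow], Nat.testBit_shiftRight,
    show 3 + i - 2 = i + 1 by omega, pow_succ']

theorem stmt_18 :
    (∀ C C' : ℕ, C ≤ C' → C' ≤ 2048 → f C' ≤ f C) ∧ f 0 = 511 ∧ f 2048 = 0 := by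
  refine ⟨fun C C' hC hC' => ?_, by decide, by decide⟩
  simp only [f, sum_Icc_testBit_eq_weightedBitSum]
  have hC8 : C / 8 < 2 ^ 9 := by omega
  have hC'8 : C' / 8 < 2 ^ 9 := by omega
  have hle := weightedBitSum_monotoneOn one_le_two 9 hC8 hC'8 (Nat.div_le_div_right hC)
  exact Nat.sub_le_sub_left hle 511
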